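/- arXiv:2406.06974 — 6 statements merged into one kernel-verified Lean document; each statement's English description precedes it below -/
import Mathlib

section
/- For all sufficiently large odd n, t(n) ≥ 0.0833·n². That is, there exists N such that for every odd integer n ≥ N there is a peaceful battle (B,W) on the n×n torus 𝕋_n with |B| = |W| ≥ 0.0833·n². -/
/-!
Put `m = ⌊n / 12⌋` and read the diagonal class `i - j - 2m` and the skew class `i + j - 6m` of a
cell through their representatives in `[0, n)`. Black takes the cells with both representatives
even inside the rectangle `i ≤ n - 4m`, `j ≤ 4m`, white the cells with both odd inside the
complementary rows and columns; then no row, column, diagonal or skew-diagonal meets both armies,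
whatever `n` and `m` are. Oddness of `n` is what makes the armies large: an integer `x ∈ [-n, 0)`
is represented by `x + n`, of the other parity. So inside its rectangle black consists of the
cells with `i + j` even on the far side of both lines `i - j = 2m` and `i + j = 6m` and with
`i + j` odd on the near side of both (white likewise, with `i + j = 6m + n`). Counting line by
line, each army has `12 m² - O(m)` cells, which exceeds `0.0833 n²` for large `n`.
-/

open Finset

/-- The cells of the `n × n` board, i.e. `[n] × [n]` with `[n] = {1, …, n}`. -/
def cells (n : ℕ) : Finset (ℕ × ℕ) := Finset.Icc 1 n ×ˢ Finset.Icc 1 n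

/-- The hyperedges of the `n × n` torus `𝕋_n`: rows, columns, `ℤ_n`-diagonals and
`ℤ_n`-skew-diagonals. -/
def torusEdges (n : ℕ) : Set (Finset (ℕ × ℕ)) :=
  {e | (∃ i ∈ Finset.Icc 1 n, e = (cells n).filter (fun p => p.1 = i)) ∨
       (∃ j ∈ Finset.Icc 1 n, e = (cells n).filter (fun p => p.2 = j)) ∨
       (∃ k : ZMod n, e = (cells n).filter (fun p => (p.1 : ZMod n) - (p.2 : ZMod n) = k)) ∨
       (∃ k : ZMod n, e = (cells n).filter (fun p => (p.1 : ZMod n) + (p.2 : ZMod n) = k))}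

/-- A peaceful battle on the `n × n` torus `𝕋_n`: disjoint sets `B, W ⊆ [n] × [n]` such that
no hyperedge meets both. -/
def IsPeacefulTorus (n : ℕ) (B W : Finset (ℕ × ℕ)) : Prop :=
  B ⊆ cells n ∧ W ⊆ cells n ∧ Disjoint B W ∧
    ∀ e ∈ torusEdges n, e ∩ B = ∅ ∨ e ∩ W = ∅

/-- `t n` : the largest `m` so that some peaceful battle `(B, W)` on `𝕋_n` has `|B| = |W| = m`. -/
noncomputable def t (n : ℕ) : ℕ :=
  sSup {m : ℕ | ∃ B W : Finset (ℕ × ℕ), IsPeacefulTorus n B W ∧ B.card = m ∧ W.card = m}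

lemma ZMod.even_val_intCast_iff {n : ℕ} (hn : Odd n) {x : ℤ} (hlo : -n ≤ x) (hhi : x < n) :
    Even (x : ZMod n).val ↔ (Even x ↔ 0 ≤ x) := by
  have : NeZero n := ⟨hn.pos.ne'⟩
  rw [← Int.even_coe_nat, ZMod.val_intCast]
  have hn2 : (n : ℤ) % 2 = 1 := by exact_mod_cast Nat.odd_iff.mp hn
  rcases le_or_gt 0 x with hx | hx
  · rw [Int.emod_eq_of_lt hx hhi]
    tauto
  · rw [← Int.add_emod_right, Int.emod_eq_of_lt (by omega) (by omega)]
    simp only [Int.even_iff]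
    omega

lemma isPeacefulTorus_of_separated {n : ℕ} {B W : Finset (ℕ × ℕ)} (R C : ℕ → Prop)
    (D S : ZMod n → Prop) (hB : B ⊆ cells n) (hW : W ⊆ cells n)
    (hsepB : ∀ p ∈ B, R p.1 ∧ C p.2 ∧ D (p.1 - p.2) ∧ S (p.1 + p.2))
    (hsepW : ∀ p ∈ W, ¬R p.1 ∧ ¬C p.2 ∧ ¬D (p.1 - p.2) ∧ ¬S (p.1 + p.2)) :
    IsPeacefulTorus n B W := by
  refine ⟨hB, hW, disjoint_left.mpr fun p hpB hpW => (hsepW p hpW).1 (hsepB p hpB).1,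
    fun e he => ?_⟩
  by_contra! hmeet
  obtain ⟨⟨p, hp⟩, ⟨q, hq⟩⟩ := hmeet
  simp only [mem_inter] at hp hq
  have sepB := hsepB p hp.2
  have sepW := hsepW q hq.2
  rcases he with ⟨_, _, rfl⟩ | ⟨_, _, rfl⟩ | ⟨_, rfl⟩ | ⟨_, rfl⟩ <;>
    simp only [mem_filter] at hp hq
  · exact sepW.1 (hq.1.2 ▸ hp.1.2 ▸ sepB.1)
  · exact sepW.2.1 (hq.1.2 ▸ hp.1.2 ▸ sepB.2.1)
  · exact sepW.2.2.1 (hq.1.2 ▸ hp.1.2 ▸ sepB.2.2.1)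
  · exact sepW.2.2.2 (hq.1.2 ▸ hp.1.2 ▸ sepB.2.2.2)

lemma IsPeacefulTorus.mono {n : ℕ} {B W B' W' : Finset (ℕ × ℕ)} (h : IsPeacefulTorus n B W)
    (hB : B' ⊆ B) (hW : W' ⊆ W) : IsPeacefulTorus n B' W' := by
  obtain ⟨hBc, hWc, hdisj, hedges⟩ := h
  refine ⟨hB.trans hBc, hW.trans hWc, hdisj.mono hB hW, fun e he => ?_⟩
  rcases hedges e he with hempty | hempty
  · exact Or.inl (subset_empty.mp (hempty ▸ inter_subset_inter_left hB))
  · exact Or.inr (subset_empty.mp (hempty ▸ inter_subset_inter_left hW))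

lemma IsPeacefulTorus.exists_card_eq_min {n : ℕ} {B W : Finset (ℕ × ℕ)}
    (h : IsPeacefulTorus n B W) :
    ∃ B' W', IsPeacefulTorus n B' W' ∧ #B' = min #B #W ∧ #W' = min #B #W := by
  obtain ⟨B', hB', hB'card⟩ := exists_subset_card_eq (min_le_left #B #W)
  obtain ⟨W', hW', hW'card⟩ := exists_subset_card_eq (min_le_right #B #W)
  exact ⟨B', W', h.mono hB' hW', hB'card, hW'card⟩

lemma card_eq_sum_card_column {n : ℕ} {S : Finset (ℕ × ℕ)} (hS : S ⊆ cells n) :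
    #S = ∑ j ∈ Icc 1 n, #{i ∈ Icc 1 n | (i, j) ∈ S} := by
  calc #S = #{p ∈ cells n | p ∈ S} := by rw [filter_mem_eq_inter, inter_eq_right.mpr hS]
    _ = _ := by simp only [card_filter, cells, sum_product_right]

lemma card_eq_sum_card_row {n : ℕ} {S : Finset (ℕ × ℕ)} (hS : S ⊆ cells n) :
    #S = ∑ i ∈ Icc 1 n, #{j ∈ Icc 1 n | (i, j) ∈ S} := by
  calc #S = #{p ∈ cells n | p ∈ S} := by rw [filter_mem_eq_inter, inter_eq_right.mpr hS]
    _ = _ := by simp only [card_filter, cells, sum_product]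

lemma le_two_mul_card_filter_mod_two (a b r : ℕ) :
    b ≤ a + 2 * #{x ∈ Icc a b | x % 2 = r % 2} := by
  set F := {x ∈ Icc a b | x % 2 = r % 2}
  have hcover : Icc a b ⊆ F ∪ F.image (· + 1) ∪ {a} := by
    intro x hx
    simp only [F, mem_union, mem_image, mem_filter, mem_Icc, mem_singleton] at hx ⊢
    by_cases hxr : x % 2 = r % 2
    · exact Or.inl (Or.inl ⟨hx, hxr⟩)
    by_cases hxa : x = a
    · exact Or.inr hxa
    · exact Or.inl (Or.inr ⟨x - 1, ⟨by omega, by omega⟩, by omega⟩)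
  have hcard := card_le_card hcover
  have hunion := card_union_le (F ∪ F.image (· + 1)) {a}
  have hunion' := card_union_le F (F.image (· + 1))
  have himage : #(F.image (· + 1)) ≤ #F := card_image_le
  rw [Nat.card_Icc] at hcard
  rw [card_singleton] at hunion
  omega

lemma le_two_mul_card_of_parity_runs {T : Finset ℕ} {a b c d w : ℕ}
    (hodd : ∀ x, a ≤ x → x ≤ b → (x + w) % 2 = 1 → x ∈ T)
    (heven : ∀ x, c ≤ x → x ≤ d → (x + w) % 2 = 0 → x ∈ T) :
    b + d ≤ a + c + 2 * #T := by
  have hcount := le_two_mul_card_filter_mod_two a b (w + 1)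
  have hcount' := le_two_mul_card_filter_mod_two c d w
  have hsub : {x ∈ Icc a b | x % 2 = (w + 1) % 2} ∪ {x ∈ Icc c d | x % 2 = w % 2} ⊆ T := by
    intro x hx
    simp only [mem_union, mem_filter, mem_Icc] at hx
    rcases hx with ⟨⟨hax, hxb⟩, hx⟩ | ⟨⟨hcx, hxd⟩, hx⟩
    · exact hodd x hax hxb (by omega)
    · exact heven x hcx hxd (by omega)
  have hdisj : Disjoint {x ∈ Icc a b | x % 2 = (w + 1) % 2} {x ∈ Icc c d | x % 2 = w % 2} :=
    disjoint_left.mpr fun x hx hx' => by simp only [mem_filter] at hx hx'; omega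
  have hcard := card_le_card hsub
  rw [card_union_of_disjoint hdisj] at hcard
  omega

lemma mul_le_sum_Icc_of_pairs (f : ℕ → ℕ) {n s δ k c : ℕ} (hkδ : k ≤ δ) (hn : s + δ + k ≤ n)
    (hpair : ∀ t < k, c ≤ f (t + (s + 1)) + f (t + (s + δ + 1))) :
    k * c ≤ ∑ i ∈ Icc 1 n, f i := by
  have hdisj : Disjoint (Ico (s + 1) (s + 1 + k)) (Ico (s + δ + 1) (s + δ + 1 + k)) :=
    disjoint_left.mpr fun x hx hx' => by simp only [mem_Ico] at hx hx'; omega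
  calc k * c = ∑ t ∈ range k, c := by simp
    _ ≤ ∑ t ∈ range k, (f (t + (s + 1)) + f (t + (s + δ + 1))) :=
      sum_le_sum fun t ht => hpair t (mem_range.mp ht)
    _ = ∑ i ∈ Ico (s + 1) (s + 1 + k) ∪ Ico (s + δ + 1) (s + δ + 1 + k), f i := by
      rw [sum_union hdisj, sum_add_distrib, range_eq_Ico, sum_Ico_add', sum_Ico_add']
      simp only [zero_add, add_comm k]
    _ ≤ ∑ i ∈ Icc 1 n, f i :=
      sum_le_sum_of_subset fun x hx => by simp only [mem_union, mem_Ico, mem_Icc] at hx ⊢; omega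

def blackArmy (n m : ℕ) : Finset (ℕ × ℕ) :=
  (cells n).filter fun p => p.1 + 4 * m ≤ n ∧ p.2 ≤ 4 * m ∧
    Even (p.1 - p.2 - 2 * m : ZMod n).val ∧ Even (p.1 + p.2 - 6 * m : ZMod n).val

def whiteArmy (n m : ℕ) : Finset (ℕ × ℕ) :=
  (cells n).filter fun p => ¬p.1 + 4 * m ≤ n ∧ ¬p.2 ≤ 4 * m ∧
    ¬Even (p.1 - p.2 - 2 * m : ZMod n).val ∧ ¬Even (p.1 + p.2 - 6 * m : ZMod n).val

lemma isPeacefulTorus_blackArmy_whiteArmy (n m : ℕ) :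
    IsPeacefulTorus n (blackArmy n m) (whiteArmy n m) :=
  isPeacefulTorus_of_separated (fun i => i + 4 * m ≤ n) (fun j => j ≤ 4 * m)
    (fun d => Even (d - 2 * m).val) (fun s => Even (s - 6 * m).val)
    (filter_subset _ _) (filter_subset _ _)
    (fun _ hp => (mem_filter.mp hp).2) (fun _ hp => (mem_filter.mp hp).2)

lemma mem_blackArmy_iff {n m i j : ℕ} (hn : Odd n) (hm : 0 < m) (hmn : 6 * m ≤ n) :
    (i, j) ∈ blackArmy n m ↔ (1 ≤ i ∧ i + 4 * m ≤ n ∧ 1 ≤ j ∧ j ≤ 4 * m) ∧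
      ((i + j) % 2 = 0 ↔ 2 * m + j ≤ i) ∧ ((i + j) % 2 = 0 ↔ 6 * m ≤ i + j) := by
  have hd : (i - j - 2 * m : ZMod n) = ((i - j - 2 * m : ℤ) : ZMod n) := by push_cast; ring
  have hs : (i + j - 6 * m : ZMod n) = ((i + j - 6 * m : ℤ) : ZMod n) := by push_cast; ring
  simp only [blackArmy, cells, mem_filter, mem_product, mem_Icc, hd, hs]
  constructor
  · rintro ⟨⟨⟨hi1, hin⟩, hj1, hjn⟩, hi, hj, hde, hse⟩
    rw [ZMod.even_val_intCast_iff hn (by omega) (by omega), Int.even_iff] at hde hse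
    omega
  · rintro ⟨⟨hi1, hi, hj1, hj⟩, hde, hse⟩
    rw [ZMod.even_val_intCast_iff hn (by omega) (by omega),
      ZMod.even_val_intCast_iff hn (by omega) (by omega), Int.even_iff, Int.even_iff]
    omega

lemma mem_whiteArmy_iff {n m i j : ℕ} (hn : Odd n) (hmn : 6 * m ≤ n) :
    (i, j) ∈ whiteArmy n m ↔ (i ≤ n ∧ n < i + 4 * m ∧ 4 * m < j ∧ j ≤ n) ∧
      ((i + j) % 2 = 0 ↔ i < 2 * m + j) ∧ ((i + j) % 2 = 0 ↔ 6 * m + n ≤ i + j) := by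
  have hn2 : n % 2 = 1 := Nat.odd_iff.mp hn
  have hd : (i - j - 2 * m : ZMod n) = ((i - j - 2 * m : ℤ) : ZMod n) := by push_cast; ring
  -- on white cells `i + j - 6m` lies in `(n - 6m, 2n - 6m]`, so shift it into `[-n, n)`
  have hs : (i + j - 6 * m : ZMod n) = ((i + j - 6 * m - n : ℤ) : ZMod n) := by
    push_cast [ZMod.natCast_self]; ring
  simp only [whiteArmy, cells, mem_filter, mem_product, mem_Icc, hd, hs]
  constructor
  · rintro ⟨⟨⟨hi1, hin⟩, hj1, hjn⟩, hi, hj, hde, hse⟩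
    rw [ZMod.even_val_intCast_iff hn (by omega) (by omega), Int.even_iff] at hde hse
    omega
  · rintro ⟨⟨hin, hi, hj, hjn⟩, hde, hse⟩
    rw [ZMod.even_val_intCast_iff hn (by omega) (by omega),
      ZMod.even_val_intCast_iff hn (by omega) (by omega), Int.even_iff, Int.even_iff]
    omega

lemma twelve_mul_sq_le_card_blackArmy_add {n m : ℕ} (hn : Odd n) (hm : 0 < m)
    (hmn : 12 * m ≤ n) : 12 * m ^ 2 ≤ #(blackArmy n m) + 4 * m := by
  set f := fun j => #{i ∈ Icc 1 n | (i, j) ∈ blackArmy n m}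
  have hcol : ∀ j x, (1 ≤ x ∧ x + 4 * m ≤ n ∧ 1 ≤ j ∧ j ≤ 4 * m) ∧
      ((x + j) % 2 = 0 ↔ 2 * m + j ≤ x) ∧ ((x + j) % 2 = 0 ↔ 6 * m ≤ x + j) →
      x ∈ {i ∈ Icc 1 n | (i, j) ∈ blackArmy n m} := fun j x hx =>
    mem_filter.mpr ⟨mem_Icc.mpr ⟨hx.1.1, by omega⟩, (mem_blackArmy_iff hn hm (by omega)).mpr hx⟩
  -- column `j ≤ 2m` holds about `n/2 - 4m + j` black cells, column `j + 2m` about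
  -- `n/2 - 2m - j`
  have hpair : ∀ t < 2 * m, n - (6 * m + 2) ≤ f (t + 1) + f (t + (2 * m + 1)) := by
    intro t ht
    have hleft : n + 2 * t ≤ 8 * m + 2 * f (t + 1) := by
      have := le_two_mul_card_of_parity_runs (a := 1) (b := t + 2 * m) (c := 6 * m - t - 1)
        (d := n - 4 * m) (w := t + 1) (fun x _ _ _ => hcol (t + 1) x (by omega))
        (fun x _ _ _ => hcol (t + 1) x (by omega))
      change _ ≤ _ + _ + 2 * f (t + 1) at this
      omega
    have hright : n ≤ 4 * m + 2 * t + 4 + 2 * f (t + (2 * m + 1)) := by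
      have := le_two_mul_card_of_parity_runs (a := 1) (b := 4 * m - t - 2)
        (c := 4 * m + t + 1) (d := n - 4 * m) (w := t + (2 * m + 1))
        (fun x _ _ _ => hcol (t + (2 * m + 1)) x (by omega))
        (fun x _ _ _ => hcol (t + (2 * m + 1)) x (by omega))
      change _ ≤ _ + _ + 2 * f (t + (2 * m + 1)) at this
      omega
    omega
  have hsum := mul_le_sum_Icc_of_pairs f (n := n) (s := 0) (le_refl (2 * m)) (by omega)
    fun t ht => by simpa only [zero_add] using hpair t ht
  have hcard : #(blackArmy n m) = ∑ j ∈ Icc 1 n, f j :=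
    card_eq_sum_card_column (filter_subset _ _)
  have hc : 6 * m ≤ n - (6 * m + 2) + 2 := by omega
  nlinarith

lemma twelve_mul_sq_le_card_whiteArmy_add {n m : ℕ} (hn : Odd n) (hm : 3 ≤ m)
    (hmn : 12 * m < n) (hnm : n < 12 * m + 12) : 12 * m ^ 2 ≤ #(whiteArmy n m) + 40 * m := by
  have hn2 : n % 2 = 1 := Nat.odd_iff.mp hn
  set h := (n + 1) / 2
  set g := fun i => #{j ∈ Icc 1 n | (i, j) ∈ whiteArmy n m}
  have hrow : ∀ i x, (i ≤ n ∧ n < i + 4 * m ∧ 4 * m < x ∧ x ≤ n) ∧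
      ((i + x) % 2 = 0 ↔ i < 2 * m + x) ∧ ((i + x) % 2 = 0 ↔ 6 * m + n ≤ i + x) →
      x ∈ {j ∈ Icc 1 n | (i, j) ∈ whiteArmy n m} := fun i x hx =>
    mem_filter.mpr ⟨mem_Icc.mpr ⟨by omega, hx.1.2.2.2⟩, (mem_whiteArmy_iff hn (by omega)).mpr hx⟩
  -- the white pattern changes phase at row `4m + h`: a row `i` below it holds about `i - 6m`
  -- white cells, a row `i'` above it about `n + 2m - i'`
  have hpair : ∀ t < 8 * m - h,
      h - 3 ≤ g (t + (n - 4 * m + 1)) + g (t + (n - 4 * m + (h - 4 * m) + 1)) := by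
    intro t ht
    set i := t + (n - 4 * m + 1)
    set i' := t + (n - 4 * m + (h - 4 * m) + 1)
    have hlow : 2 * i ≤ 12 * m + 1 + 2 * g i := by
      have := le_two_mul_card_of_parity_runs (a := 4 * m + 1) (b := i - 2 * m)
        (c := 6 * m + n - i) (d := n) (w := i)
        (fun x _ _ _ => hrow i x (by omega)) (fun x _ _ _ => hrow i x (by omega))
      change _ ≤ _ + _ + 2 * g i at this
      omega
    have hhigh : 2 * n + 4 * m ≤ 2 * i' + 3 + 2 * g i' := by
      have := le_two_mul_card_of_parity_runs (a := 4 * m + 1) (b := 6 * m + n - i' - 1)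
        (c := i' - 2 * m + 1) (d := n) (w := i')
        (fun x _ _ _ => hrow i' x (by omega)) (fun x _ _ _ => hrow i' x (by omega))
      change _ ≤ _ + _ + 2 * g i' at this
      omega
    omega
  have hsum := mul_le_sum_Icc_of_pairs g (n := n) (s := n - 4 * m) (δ := h - 4 * m)
    (by omega) (by omega) hpair
  have hcard : #(whiteArmy n m) = ∑ i ∈ Icc 1 n, g i :=
    card_eq_sum_card_row (filter_subset _ _)
  have ha : 2 * m ≤ 8 * m - h + 6 := by omega
  have hb : 6 * m ≤ h - 3 + 2 := by omega
  nlinarith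

/-- **Odd torus lower bound.** For all sufficiently large odd `n`, `t(n) ≥ 0.0833 n²`:
there is a peaceful battle `(B, W)` on `𝕋_n` with `|B| = |W| ≥ 0.0833 n²`. -/
theorem odd_torus_lower_bound :
    ∃ N : ℕ, ∀ n : ℕ, N ≤ n → Odd n →
      ∃ B W : Finset (ℕ × ℕ), IsPeacefulTorus n B W ∧ B.card = W.card ∧
        (0.0833 : ℝ) * (n : ℝ) ^ 2 ≤ (B.card : ℝ) := by
  refine ⟨200000, fun n hN hn => ?_⟩
  set m := n / 12
  have hn2 : n % 2 = 1 := Nat.odd_iff.mp hn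
  have hm : 16666 ≤ m := by omega
  have hmn : 12 * m < n := by omega
  have hnm : n < 12 * m + 12 := by omega
  obtain ⟨B, W, hpeace, hBcard, hWcard⟩ :=
    (isPeacefulTorus_blackArmy_whiteArmy n m).exists_card_eq_min
  have hk : 12 * m ^ 2 ≤ #B + 40 * m := by
    have := twelve_mul_sq_le_card_blackArmy_add hn (by omega) hmn.le
    have := twelve_mul_sq_le_card_whiteArmy_add hn (by omega) hmn hnm
    omega
  refine ⟨B, W, hpeace, hBcard.trans hWcard.symm, ?_⟩
  have hmR : (16666 : ℝ) ≤ m := by exact_mod_cast hm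
  have hnR : (n : ℝ) ≤ 12 * m + 11 := by exact_mod_cast (by omega : n ≤ 12 * m + 11)
  have hkR : 12 * (m : ℝ) ^ 2 ≤ #B + 40 * m := by exact_mod_cast hk
  nlinarith [mul_le_mul hnR hnR (Nat.cast_nonneg n) (by positivity)]
end

section
/- For every odd n, t(n) ≤ 0.125·n² = n²/8. That is, every peaceful battle (B,W) on the n×n torus 𝕋_n with |B| = |W| and n odd satisfies |B| ≤ n²/8. -/
open Finset

/-! Send the board to `(ZMod n)²`, where rows, columns, diagonals and skew-diagonals become the
fibres of the linear forms `ℓ₁ = x`, `ℓ₂ = y`, `ℓ₃ = x - y`, `ℓ₄ = x + y`; for odd `n` any two of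
them are jointly bijective, since their determinants are `±1` or `±2`. Let `u = 𝟙_B - 𝟙_W`, so
`∑ u = 0`, and let `S_k(t)` be the sum of `u` over the fibre `ℓ_k = t`. The functions `S_k ∘ ℓ_k`
are then pairwise orthogonal, and Bessel's inequality gives `∑_k ∑_t S_k(t)² ≤ n ‖u‖² = 2n|B|`.
Every line is monochromatic, so `∑_t |S_k(t)| = 2|B|` and Cauchy–Schwarz gives
`∑_t S_k(t)² ≥ 4|B|²/n` for each `k`. Hence `16|B|²/n ≤ 2n|B|`, i.e. `8|B| ≤ n²`. -/

open Function

section LineSums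

variable {V T : Type*} [Fintype V]

theorem sum_comp_mul_comp_of_bijective [Fintype T] {R : Type*} [CommSemiring R] {L L' : V → T}
    (h : Bijective fun v => (L v, L' v)) (F G : T → R) :
    ∑ v, F (L v) * G (L' v) = (∑ t, F t) * ∑ t, G t := by
  rw [sum_mul_sum, ← Fintype.sum_prod_type']
  exact Fintype.sum_bijective _ h _ _ fun v => rfl

theorem sum_comp_of_bijective [Fintype T] {R : Type*} [CommSemiring R] {L L' : V → T}
    (h : Bijective fun v => (L v, L' v)) (F : T → R) :
    ∑ v, F (L v) = Fintype.card T * ∑ t, F t := by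
  simpa [mul_comm] using sum_comp_mul_comp_of_bijective h F 1

variable [DecidableEq T]

def lineSum (L : V → T) (u : V → ℝ) (t : T) : ℝ := ∑ v with L v = t, u v

section Bessel

variable [Fintype T]

theorem sum_lineSum (L : V → T) (u : V → ℝ) : ∑ t, lineSum L u t = ∑ v, u v :=
  sum_fiberwise _ _ _

theorem sum_mul_lineSum_comp (L : V → T) (u : V → ℝ) :
    ∑ v, u v * lineSum L u (L v) = ∑ t, lineSum L u t ^ 2 := by
  rw [← sum_fiberwise univ L]
  refine sum_congr rfl fun t _ => ?_
  rw [sq, lineSum, sum_mul]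
  exact sum_congr rfl fun v hv => by rw [(mem_filter.1 hv).2, lineSum]

theorem sum_sum_lineSum_sq_le {ι : Type*} [Fintype ι] [Nontrivial ι] {L : ι → V → T}
    (hL : Pairwise fun k k' => Bijective fun v => (L k v, L k' v))
    (u : V → ℝ) (hu : ∑ v, u v = 0) :
    ∑ k, ∑ t, lineSum (L k) u t ^ 2 ≤ Fintype.card T * ∑ v, u v ^ 2 := by
  set N : ℝ := (Fintype.card T : ℝ)
  set P := ∑ k, ∑ t, lineSum (L k) u t ^ 2
  let S : V → ℝ := fun v => ∑ k, lineSum (L k) u (L k v)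
  have hdiag (k : ι) : ∑ v, lineSum (L k) u (L k v) ^ 2 = N * ∑ t, lineSum (L k) u t ^ 2 := by
    obtain ⟨k', hk'⟩ := exists_ne k
    exact sum_comp_of_bijective (hL hk'.symm) fun t => lineSum (L k) u t ^ 2
  have hcross {k k' : ι} (h : k ≠ k') :
      ∑ v, lineSum (L k) u (L k v) * lineSum (L k') u (L k' v) = 0 := by
    rw [sum_comp_mul_comp_of_bijective (hL h), sum_lineSum, hu, zero_mul]
  have hS_sq : ∑ v, S v ^ 2 = N * P := by
    simp only [S, sq, sum_mul_sum]
    rw [sum_comm, mul_sum]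
    refine sum_congr rfl fun k _ => ?_
    rw [sum_comm, sum_eq_single k (fun k' _ h => hcross h.symm) (by simp)]
    simpa only [sq] using hdiag k
  have hu_S : ∑ v, u v * S v = P := by
    simp only [S, mul_sum]
    rw [sum_comm]
    exact sum_congr rfl fun k _ => sum_mul_lineSum_comp (L k) u
  -- `S / N` is the orthogonal projection of `u` onto the sum of the spaces of mean-zero functions
  -- constant along the lines of one direction, so `‖N u - S‖² ≥ 0` is Bessel's inequality.
  have hnonneg : 0 ≤ ∑ v, (N * u v - S v) ^ 2 := sum_nonneg fun v _ => sq_nonneg _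
  have hexpand : ∑ v, (N * u v - S v) ^ 2 = N ^ 2 * ∑ v, u v ^ 2 - N * P := by
    have : ∑ v, (N * u v - S v) ^ 2
        = N ^ 2 * ∑ v, u v ^ 2 - 2 * N * ∑ v, u v * S v + ∑ v, S v ^ 2 := by
      simp only [mul_sum, ← sum_sub_distrib, ← sum_add_distrib]
      exact sum_congr rfl fun v _ => by ring
    rw [this, hu_S, hS_sq]; ring
  rcases (Fintype.card T).eq_zero_or_pos with hT | hT
  · have : IsEmpty T := Fintype.card_eq_zero_iff.1 hT
    simp [P, N]
  · have hN : 0 < N := Nat.cast_pos.2 hT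
    nlinarith

end Bessel

variable [DecidableEq V]

def signedIndicator (B W : Finset V) (v : V) : ℝ :=
  (if v ∈ B then 1 else 0) - if v ∈ W then 1 else 0

theorem lineSum_signedIndicator (L : V → T) (B W : Finset V) (t : T) :
    lineSum L (signedIndicator B W) t = #{v ∈ B | L v = t} - #{v ∈ W | L v = t} := by
  simp only [lineSum, signedIndicator, sum_sub_distrib, sum_boole, filter_filter]
  congr 3 <;> ext <;> simp [and_comm]

theorem sum_signedIndicator (B W : Finset V) : ∑ v, signedIndicator B W v = #B - #W := by
  simp [signedIndicator, sum_sub_distrib]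

theorem sum_signedIndicator_sq {B W : Finset V} (h : Disjoint B W) :
    ∑ v, signedIndicator B W v ^ 2 = #B + #W := by
  have (v : V) :
      signedIndicator B W v ^ 2 = (if v ∈ B then 1 else 0) + if v ∈ W then 1 else 0 := by
    by_cases hB : v ∈ B
    · simp [signedIndicator, hB, disjoint_left.1 h hB]
    · by_cases hW : v ∈ W <;> simp [signedIndicator, hB, hW]
  simp [this, sum_add_distrib]

variable [Fintype T]

theorem sum_abs_lineSum_signedIndicator {L : V → T} {B W : Finset V}
    (h : ∀ t, (∀ v ∈ B, L v ≠ t) ∨ ∀ v ∈ W, L v ≠ t) :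
    ∑ t, |lineSum L (signedIndicator B W) t| = #B + #W := by
  have (t : T) :
      |lineSum L (signedIndicator B W) t| = #{v ∈ B | L v = t} + #{v ∈ W | L v = t} := by
    rw [lineSum_signedIndicator]
    rcases h t with hB | hW
    · simp [filter_eq_empty_iff.2 hB]
    · simp [filter_eq_empty_iff.2 hW]
  simp only [this, sum_add_distrib]
  norm_cast
  rw [← card_eq_sum_card_fiberwise fun v _ => mem_univ (L v),
    ← card_eq_sum_card_fiberwise fun v _ => mem_univ (L v)]

theorem sq_card_add_card_le_card_mul_sum_lineSum_sq {L : V → T} {B W : Finset V}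
    (h : ∀ t, (∀ v ∈ B, L v ≠ t) ∨ ∀ v ∈ W, L v ≠ t) :
    ((#B + #W : ℕ) : ℝ) ^ 2 ≤ Fintype.card T * ∑ t, lineSum L (signedIndicator B W) t ^ 2 := by
  simpa [sum_abs_lineSum_signedIndicator h] using
    sq_sum_le_card_mul_sum_sq (s := univ) (f := fun t => |lineSum L (signedIndicator B W) t|)

theorem two_mul_card_mul_card_le_card_sq {ι : Type*} [Fintype ι] [Nontrivial ι] {L : ι → V → T}
    (hL : Pairwise fun k k' => Bijective fun v => (L k v, L k' v))
    {B W : Finset V} (hBW : Disjoint B W) (hcard : #B = #W)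
    (hlines : ∀ k t, (∀ v ∈ B, L k v ≠ t) ∨ ∀ v ∈ W, L k v ≠ t) :
    2 * Fintype.card ι * #B ≤ Fintype.card T ^ 2 := by
  have hupper := sum_sum_lineSum_sq_le hL (signedIndicator B W)
    (by rw [sum_signedIndicator, hcard, sub_self])
  have hlower : ∑ _k : ι, ((#B + #W : ℕ) : ℝ) ^ 2 ≤
      Fintype.card T * ∑ k, ∑ t, lineSum (L k) (signedIndicator B W) t ^ 2 := by
    rw [mul_sum]
    exact sum_le_sum fun k _ => sq_card_add_card_le_card_mul_sum_lineSum_sq (hlines k)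
  rw [sum_signedIndicator_sq hBW, ← hcard] at hupper
  rw [sum_const, card_univ, ← hcard, nsmul_eq_mul] at hlower
  rcases (#B).eq_zero_or_pos with h0 | hpos
  · simp [h0]
  · have hm : (0 : ℝ) < #B := Nat.cast_pos.2 hpos
    have hN : (0 : ℝ) ≤ Fintype.card T := Nat.cast_nonneg _
    have : ((2 * Fintype.card ι * #B : ℕ) : ℝ) ≤ (Fintype.card T ^ 2 : ℕ) := by
      push_cast at hlower ⊢
      nlinarith [mul_le_mul_of_nonneg_left hupper hN]
    exact_mod_cast this

end LineSums

section Torus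

variable {n : ℕ}

def torusLine (n : ℕ) : Fin 4 → ZMod n × ZMod n → ZMod n :=
  ![Prod.fst, Prod.snd, fun v => v.1 - v.2, fun v => v.1 + v.2]

theorem torusLine_sub (k : Fin 4) (v w : ZMod n × ZMod n) :
    torusLine n k (v - w) = torusLine n k v - torusLine n k w := by
  fin_cases k <;> simp [torusLine] <;> ring

theorem eq_zero_of_sub_eq_zero_of_add_eq_zero {R : Type*} [CommRing R] (h2 : IsUnit (2 : R))
    {a b : R} (hsub : a - b = 0) (hadd : a + b = 0) : a = 0 ∧ b = 0 := by
  have ha : 2 * a = 0 := by linear_combination hadd + hsub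
  have hb : 2 * b = 0 := by linear_combination hadd - hsub
  exact ⟨h2.mul_right_eq_zero.1 ha, h2.mul_right_eq_zero.1 hb⟩

theorem torusLine_pairwise_bijective (hn : Odd n) :
    Pairwise fun k k' => Bijective fun v => (torusLine n k v, torusLine n k' v) := by
  have : NeZero n := ⟨hn.pos.ne'⟩
  have h2 : IsUnit (2 : ZMod n) := by
    exact_mod_cast (ZMod.isUnit_iff_coprime 2 n).2 (Nat.coprime_two_left.2 hn)
  intro k k' hk
  refine Finite.injective_iff_bijective.1 fun v w hvw => sub_eq_zero.1 ?_
  obtain ⟨hx, hy⟩ : torusLine n k (v - w) = 0 ∧ torusLine n k' (v - w) = 0 := by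
    simp_all [torusLine_sub]
  generalize v - w = x at hx hy
  obtain ⟨a, b⟩ := x
  fin_cases k <;> fin_cases k' <;> simp_all [torusLine] <;>
    first
    | exact eq_zero_of_sub_eq_zero_of_add_eq_zero h2 hx hy
    | exact eq_zero_of_sub_eq_zero_of_add_eq_zero h2 hy hx

theorem natCast_injOn_Icc : Set.InjOn (Nat.cast : ℕ → ZMod n) (Icc 1 n) := by
  intro i hi j hj hij
  simp only [coe_Icc, Set.mem_Icc] at hi hj
  refine ((ZMod.natCast_eq_natCast_iff i j n).1 hij).eq_of_abs_lt ?_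
  rw [abs_lt]; constructor <;> omega

theorem exists_mem_Icc_natCast_eq [NeZero n] (t : ZMod n) : ∃ i ∈ Icc 1 n, (i : ZMod n) = t := by
  have himage : (Icc 1 n).image (Nat.cast : ℕ → ZMod n) = univ := eq_univ_of_card _ <| by
    rw [card_image_of_injOn natCast_injOn_Icc, Nat.card_Icc, ZMod.card, Nat.add_sub_cancel]
  exact mem_image.1 (himage ▸ mem_univ t)

def cellToTorus (n : ℕ) (p : ℕ × ℕ) : ZMod n × ZMod n := (p.1, p.2)

theorem cellToTorus_injOn : Set.InjOn (cellToTorus n) (cells n) := by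
  intro p hp q hq hpq
  simp only [cells, coe_product, Set.mem_prod, mem_coe] at hp hq
  simp only [cellToTorus, Prod.mk.injEq] at hpq
  exact Prod.ext (natCast_injOn_Icc hp.1 hq.1 hpq.1) (natCast_injOn_Icc hp.2 hq.2 hpq.2)

theorem filter_torusLine_mem_torusEdges [NeZero n] (k : Fin 4) (t : ZMod n) :
    {p ∈ cells n | torusLine n k (cellToTorus n p) = t} ∈ torusEdges n := by
  have hcoord {j : ℕ} (hj : j ∈ Icc 1 n) {i : ℕ} (hi : i ∈ Icc 1 n) :
      (j : ZMod n) = i ↔ j = i :=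
    ⟨fun h => natCast_injOn_Icc hj hi h, congrArg _⟩
  fin_cases k
  · obtain ⟨i, hi, rfl⟩ := exists_mem_Icc_natCast_eq t
    refine Or.inl ⟨i, hi, filter_congr fun p hp => ?_⟩
    exact hcoord (mem_product.1 hp).1 hi
  · obtain ⟨i, hi, rfl⟩ := exists_mem_Icc_natCast_eq t
    refine Or.inr <| Or.inl ⟨i, hi, filter_congr fun p hp => ?_⟩
    exact hcoord (mem_product.1 hp).2 hi
  · exact Or.inr <| Or.inr <| Or.inl ⟨t, rfl⟩
  · exact Or.inr <| Or.inr <| Or.inr ⟨t, rfl⟩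

theorem IsPeacefulTorus.torusLine_ne [NeZero n] {B W : Finset (ℕ × ℕ)} (h : IsPeacefulTorus n B W)
    (k : Fin 4) (t : ZMod n) :
    (∀ v ∈ B.image (cellToTorus n), torusLine n k v ≠ t) ∨
      ∀ v ∈ W.image (cellToTorus n), torusLine n k v ≠ t := by
  obtain ⟨hB, hW, -, hedges⟩ := h
  simp only [forall_mem_image]
  refine (hedges _ (filter_torusLine_mem_torusEdges k t)).imp ?_ ?_ <;>
    intro hempty p hp hpt <;>
    refine eq_empty_iff_forall_notMem.1 hempty p (mem_inter.2 ⟨mem_filter.2 ⟨?_, hpt⟩, hp⟩)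
  exacts [hB hp, hW hp]

theorem IsPeacefulTorus.eight_mul_card_le_sq {B W : Finset (ℕ × ℕ)} (hn : Odd n)
    (h : IsPeacefulTorus n B W) (hcard : #B = #W) : 8 * #B ≤ n ^ 2 := by
  have : NeZero n := ⟨hn.pos.ne'⟩
  have hinj : Set.InjOn (cellToTorus n) (↑B ∪ ↑W) :=
    cellToTorus_injOn.mono (Set.union_subset (coe_subset.2 h.1) (coe_subset.2 h.2.1))
  have hcardB : #(B.image (cellToTorus n)) = #B := card_image_of_injOn (hinj.mono (by simp))
  have hcardW : #(W.image (cellToTorus n)) = #W := card_image_of_injOn (hinj.mono (by simp))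
  have hdisj : Disjoint (B.image (cellToTorus n)) (W.image (cellToTorus n)) := by
    rw [disjoint_iff_inter_eq_empty, ← image_inter_of_injOn _ _ hinj,
      disjoint_iff_inter_eq_empty.1 h.2.2.1, image_empty]
  simpa [hcardB] using two_mul_card_mul_card_le_card_sq (torusLine_pairwise_bijective hn) hdisj
    (by rw [hcardB, hcardW, hcard]) h.torusLine_ne

end Torus

/-- **Odd torus upper bound.** For every odd `n`, every peaceful battle `(B, W)` on `𝕋_n`
with `|B| = |W|` satisfies `|B| ≤ n² / 8`. -/
theorem odd_torus_upper_bound (n : ℕ) (hn : Odd n) (B W : Finset (ℕ × ℕ))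
    (hBW : IsPeacefulTorus n B W) (hcard : B.card = W.card) :
    (B.card : ℝ) ≤ (n : ℝ) ^ 2 / 8 := by
  rw [le_div_iff₀ (by norm_num), mul_comm]
  exact_mod_cast hBW.eight_mul_card_le_sq hn hcard
end

section
/- For all n ∈ ℕ and all a,b ∈ [n], the (a,b)-plaid is a peaceful battle on the 2n×2n torus 𝕋_{2n}: the sets B = B₁∪B₂∪B₃ and W of the (a,b)-plaid are disjoint, and every hyperedge e of 𝕋_{2n} satisfies e∩B = ∅ or e∩W = ∅. -/
open Finset

/-- The black squares `B₁ ∪ B₂ ∪ B₃` of the `(a,b)`-plaid on the `N × N` board: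
`B₁ = {(i,j) ∈ [a] × [b] : i + j odd}`,
`B₂ = {(i,j) : i ∈ [a], b+1 ≤ j ≤ N, i even, j odd}`,
`B₃ = {(i,j) : a+1 ≤ i ≤ N, j ∈ [b], i odd, j even}`. -/
def plaidB (N a b : ℕ) : Finset (ℕ × ℕ) :=
  (cells N).filter (fun p =>
    (p.1 ≤ a ∧ p.2 ≤ b ∧ Odd (p.1 + p.2)) ∨
    (p.1 ≤ a ∧ b + 1 ≤ p.2 ∧ Even p.1 ∧ Odd p.2) ∨
    (a + 1 ≤ p.1 ∧ p.2 ≤ b ∧ Odd p.1 ∧ Even p.2))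

/-- The white squares of the `(a,b)`-plaid on the `N × N` board:
`W = {(i,j) : a+1 ≤ i ≤ N, b+1 ≤ j ≤ N, i and j both even}`. -/
def plaidW (N a b : ℕ) : Finset (ℕ × ℕ) :=
  (cells N).filter (fun p => a + 1 ≤ p.1 ∧ b + 1 ≤ p.2 ∧ Even p.1 ∧ Even p.2)

/-!
Every black cell of a plaid has odd coordinate sum and every white cell even coordinate sum.
On a torus of even side the parity of `i + j` is constant along each `ℤ_N`-diagonal and
`ℤ_N`-skew-diagonal (it is `i ± j` read modulo `2`), so no diagonal meets both colours. A white
cell lies in a row `i > a` and column `j > b`, both even, while the black cells in such rows and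
columns have odd index there.
-/

section ParityOnEvenTorus

variable {N : ℕ} {x₁ x₂ y₁ y₂ : ℕ}

theorem even_add_iff_of_natCast_sub_eq (hN : 2 ∣ N)
    (h : (x₁ : ZMod N) - x₂ = (y₁ : ZMod N) - y₂) :
    Even (x₁ + x₂) ↔ Even (y₁ + y₂) := by
  have h₂ := congrArg (ZMod.castHom hN (ZMod 2)) h
  simp only [map_sub, map_natCast, CharTwo.sub_eq_add] at h₂
  rw [← ZMod.natCast_eq_zero_iff_even, ← ZMod.natCast_eq_zero_iff_even]
  push_cast
  rw [h₂]

theorem even_add_iff_of_natCast_add_eq (hN : 2 ∣ N)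
    (h : (x₁ : ZMod N) + x₂ = (y₁ : ZMod N) + y₂) :
    Even (x₁ + x₂) ↔ Even (y₁ + y₂) := by
  have h₂ := congrArg (ZMod.castHom hN (ZMod 2)) h
  simp only [map_add, map_natCast] at h₂
  rw [← ZMod.natCast_eq_zero_iff_even, ← ZMod.natCast_eq_zero_iff_even]
  push_cast
  rw [h₂]

end ParityOnEvenTorus

theorem isPeacefulTorus_of_parity {N : ℕ} (hN : 2 ∣ N) {B W : Finset (ℕ × ℕ)}
    (hBN : B ⊆ cells N) (hWN : W ⊆ cells N)
    (hB : ∀ p ∈ B, Odd (p.1 + p.2)) (hW : ∀ q ∈ W, Even (q.1 + q.2))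
    (hrow : ∀ p ∈ B, ∀ q ∈ W, p.1 ≠ q.1) (hcol : ∀ p ∈ B, ∀ q ∈ W, p.2 ≠ q.2) :
    IsPeacefulTorus N B W := by
  refine ⟨hBN, hWN, disjoint_left.2 fun p hpB hpW => Nat.not_even_iff_odd.2 (hB p hpB) (hW p hpW),
    fun e he => ?_⟩
  by_contra! hmeet
  obtain ⟨⟨p, hp⟩, ⟨q, hq⟩⟩ := hmeet
  obtain ⟨hpe, hpB⟩ := mem_inter.1 hp
  obtain ⟨hqe, hqW⟩ := mem_inter.1 hq
  have hparity : ¬(Even (p.1 + p.2) ↔ Even (q.1 + q.2)) := by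
    simp [hW q hqW, Nat.not_even_iff_odd.2 (hB p hpB)]
  rcases he with ⟨i, -, rfl⟩ | ⟨j, -, rfl⟩ | ⟨k, rfl⟩ | ⟨k, rfl⟩ <;>
    simp only [mem_filter] at hpe hqe
  · exact hrow p hpB q hqW (hpe.2.trans hqe.2.symm)
  · exact hcol p hpB q hqW (hpe.2.trans hqe.2.symm)
  · exact hparity (even_add_iff_of_natCast_sub_eq hN (hpe.2.trans hqe.2.symm))
  · exact hparity (even_add_iff_of_natCast_add_eq hN (hpe.2.trans hqe.2.symm))

section Plaid

variable {N a b : ℕ} {p q : ℕ × ℕ}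

theorem odd_add_of_mem_plaidB (hp : p ∈ plaidB N a b) : Odd (p.1 + p.2) := by
  simp only [plaidB, mem_filter, Nat.odd_iff, Nat.even_iff] at hp
  rw [Nat.odd_iff]
  omega

theorem even_add_of_mem_plaidW (hq : q ∈ plaidW N a b) : Even (q.1 + q.2) := by
  simp only [plaidW, mem_filter, Nat.even_iff] at hq
  rw [Nat.even_iff]
  omega

theorem plaidB_plaidW_fst_ne (hp : p ∈ plaidB N a b) (hq : q ∈ plaidW N a b) : p.1 ≠ q.1 := by
  simp only [plaidB, plaidW, mem_filter, Nat.odd_iff, Nat.even_iff] at hp hq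
  omega

theorem plaidB_plaidW_snd_ne (hp : p ∈ plaidB N a b) (hq : q ∈ plaidW N a b) : p.2 ≠ q.2 := by
  simp only [plaidB, plaidW, mem_filter, Nat.odd_iff, Nat.even_iff] at hp hq
  omega

end Plaid

theorem plaid_isPeaceful_general (n a b : ℕ) :
    IsPeacefulTorus (2 * n) (plaidB (2 * n) a b) (plaidW (2 * n) a b) :=
  isPeacefulTorus_of_parity (dvd_mul_right 2 n) (filter_subset _ _) (filter_subset _ _)
    (fun _ => odd_add_of_mem_plaidB) (fun _ => even_add_of_mem_plaidW)
    (fun _ hp _ => plaidB_plaidW_fst_ne hp) (fun _ hp _ => plaidB_plaidW_snd_ne hp)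

/-- For all `n ∈ ℕ` and `a, b ∈ [n]`, the `(a,b)`-plaid is a peaceful battle on the
`2n × 2n` torus `𝕋_{2n}`. -/
theorem plaid_isPeaceful (n a b : ℕ) (ha : a ∈ Finset.Icc 1 n) (hb : b ∈ Finset.Icc 1 n) :
    IsPeacefulTorus (2 * n) (plaidB (2 * n) a b) (plaidW (2 * n) a b) :=
  plaid_isPeaceful_general n a b
end

section
/- Let c = 2−√3. There is a constant C > 0 such that for every even n ∈ ℕ, setting a = ⌊cn⌋ and b = ⌈cn⌉, the (a,b)-plaid (B,W) on the n×n board satisfies min{|B|,|W|} ≥ (c/2)·n² − C·n. -/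
open Finset

lemma card_even_Icc (m : ℕ) : ((Finset.Icc 1 m).filter (fun x => Even x)).card = m / 2 := by
  induction m with
  | zero => simp
  | succ m ih =>
    rw [show Finset.Icc 1 (m+1) = insert (m+1) (Finset.Icc 1 m) by
      rw [← Finset.insert_Icc_right_eq_Icc_add_one (by omega)], Finset.filter_insert]
    by_cases h : Even (m+1)
    · rw [if_pos h, Finset.card_insert_of_notMem (by simp), ih]
      rw [Nat.even_iff] at h; omega
    · rw [if_neg h, ih]
      rw [Nat.even_iff] at h
      omega

lemma card_odd_Icc (m : ℕ) : ((Finset.Icc 1 m).filter (fun x => Odd x)).card = (m + 1) / 2 := by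
  induction m with
  | zero => simp
  | succ m ih =>
    rw [show Finset.Icc 1 (m+1) = insert (m+1) (Finset.Icc 1 m) by
      rw [← Finset.insert_Icc_right_eq_Icc_add_one (by omega)], Finset.filter_insert]
    by_cases h : Odd (m+1)
    · rw [if_pos h, Finset.card_insert_of_notMem (by simp), ih]
      rw [Nat.odd_iff] at h; omega
    · rw [if_neg h, ih]
      rw [Nat.odd_iff] at h
      omega

lemma card_even_Icc' (a n : ℕ) :
    ((Finset.Icc (a+1) n).filter (fun x => Even x)).card = n / 2 - a / 2 := by
  rcases le_or_gt a n with h | h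
  · have hset : (Finset.Icc (a+1) n).filter (fun x => Even x)
        = ((Finset.Icc 1 n).filter (fun x => Even x)) \ ((Finset.Icc 1 a).filter (fun x => Even x)) := by
      ext x
      simp only [Finset.mem_filter, Finset.mem_sdiff, Finset.mem_Icc, Nat.even_iff]
      omega
    rw [hset, Finset.card_sdiff_of_subset, card_even_Icc, card_even_Icc]
    intro x hx
    simp only [Finset.mem_filter, Finset.mem_Icc] at hx ⊢
    exact ⟨⟨hx.1.1, le_trans hx.1.2 h⟩, hx.2⟩
  · rw [Finset.Icc_eq_empty (by omega)]
    simp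
    omega

lemma cardB (n a b : ℕ) (ha : a ≤ n) (hb : b ≤ n) :
    (plaidB n a b).card = a / 2 * ((n + 1) / 2) + (n + 1) / 2 * (b / 2) := by
  have hset : plaidB n a b =
      ((Finset.Icc 1 a).filter (fun x => Even x) ×ˢ (Finset.Icc 1 n).filter (fun x => Odd x)) ∪
      ((Finset.Icc 1 n).filter (fun x => Odd x) ×ˢ (Finset.Icc 1 b).filter (fun x => Even x)) := by
    ext ⟨i, j⟩
    simp only [plaidB, cells, Finset.mem_filter, Finset.mem_union, Finset.mem_product,
      Finset.mem_Icc, Nat.even_iff, Nat.odd_iff, Nat.odd_add]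
    constructor
    · rintro ⟨⟨⟨hi1, hi2⟩, hj1, hj2⟩, h⟩
      omega
    · rintro (⟨⟨⟨hi1, hi2⟩, he⟩, ⟨hj1, hj2⟩, ho⟩ | ⟨⟨⟨hi1, hi2⟩, ho⟩, ⟨hj1, hj2⟩, he⟩)
      · refine ⟨⟨⟨hi1, le_trans hi2 ha⟩, hj1, hj2⟩, ?_⟩; omega
      · refine ⟨⟨⟨hi1, hi2⟩, hj1, le_trans hj2 hb⟩, ?_⟩; omega
  rw [hset, Finset.card_union_of_disjoint, Finset.card_product, Finset.card_product]
  · simp only [card_even_Icc, card_odd_Icc]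
  rw [Finset.disjoint_left]
  rintro ⟨i, j⟩ hp hq
  simp only [Finset.mem_product, Finset.mem_filter, Nat.even_iff, Nat.odd_iff] at hp hq
  omega

lemma cardW (n a b : ℕ) :
    (plaidW n a b).card = (n / 2 - a / 2) * (n / 2 - b / 2) := by
  have hset : plaidW n a b =
      ((Finset.Icc (a+1) n).filter (fun x => Even x) ×ˢ (Finset.Icc (b+1) n).filter (fun x => Even x)) := by
    ext ⟨i, j⟩
    simp only [plaidW, cells, Finset.mem_filter, Finset.mem_product, Finset.mem_Icc, Nat.even_iff]
    omega
  rw [hset, Finset.card_product, card_even_Icc', card_even_Icc']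

set_option maxHeartbeats 1000000 in
/-- Let `c = 2 − √3`. There is a constant `C > 0` such that for every even `n`, with
`a = ⌊c n⌋` and `b = ⌈c n⌉`, the `(a,b)`-plaid `(B, W)` on the `n × n` board satisfies
`min {|B|, |W|} ≥ (c/2) n² − C n`. -/
theorem plaid_card_lower_bound :
    ∃ C : ℝ, 0 < C ∧ ∀ n : ℕ, Even n →
      (2 - Real.sqrt 3) / 2 * (n : ℝ) ^ 2 - C * (n : ℝ) ≤
        min ((plaidB n ⌊(2 - Real.sqrt 3) * (n : ℝ)⌋₊ ⌈(2 - Real.sqrt 3) * (n : ℝ)⌉₊).card : ℝ)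
            ((plaidW n ⌊(2 - Real.sqrt 3) * (n : ℝ)⌋₊ ⌈(2 - Real.sqrt 3) * (n : ℝ)⌉₊).card : ℝ) := by
  refine ⟨2, by norm_num, ?_⟩
  intro n hn
  obtain ⟨m, rfl⟩ := hn
  set c : ℝ := 2 - Real.sqrt 3 with hc
  have h3 : (Real.sqrt 3) ^ 2 = 3 := Real.sq_sqrt (by norm_num)
  have h30 : (0:ℝ) ≤ Real.sqrt 3 := Real.sqrt_nonneg 3
  have h3a : 1 < Real.sqrt 3 := by nlinarith
  have h3b : Real.sqrt 3 < 2 := by nlinarith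
  have hc0 : 0 < c := by rw [hc]; linarith
  have hc1 : c < 1 := by rw [hc]; linarith
  have hsq : (1 - c) ^ 2 = 2 * c := by rw [hc]; linear_combination h3
  have hch : c ≤ 1/2 := by rw [hc]; nlinarith
  clear_value c
  rcases Nat.eq_zero_or_pos m with rfl | hm
  · norm_num
  have hm1 : (1:ℝ) ≤ (m:ℝ) := by exact_mod_cast hm
  have hNval : ((m + m : ℕ) : ℝ) = 2 * (m:ℝ) := by push_cast; ring
  have hN0 : (0:ℝ) ≤ c * ((m + m : ℕ) : ℝ) := by rw [hNval]; positivity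
  set a := ⌊c * ((m + m : ℕ) : ℝ)⌋₊ with ha
  set b := ⌈c * ((m + m : ℕ) : ℝ)⌉₊ with hb
  have hmul : c * ((m + m : ℕ) : ℝ) = 2 * (c * (m:ℝ)) := by rw [hNval]; ring
  have haU : (a : ℝ) ≤ 2 * (c * m) := by
    have h1 := Nat.floor_le hN0
    rw [ha]; linarith [h1, hmul]
  have haL : 2 * (c * m) - 1 ≤ (a : ℝ) := by
    have h1 := Nat.lt_floor_add_one (c * ((m + m : ℕ) : ℝ))
    rw [ha]; linarith [h1, hmul]
  have hbL : 2 * (c * m) ≤ (b : ℝ) := by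
    have h1 := Nat.le_ceil (c * ((m + m : ℕ) : ℝ))
    rw [hb]; linarith [h1, hmul]
  have hbU : (b : ℝ) ≤ 2 * (c * m) + 1 := by
    have h1 := Nat.ceil_lt_add_one hN0
    rw [hb]; linarith [h1, hmul]
  clear_value a b
  have hcm0 : (0:ℝ) ≤ c * m := by positivity
  have hcm1 : c * (m:ℝ) ≤ m := by nlinarith
  have han : a ≤ m + m := by
    have h1 : (a:ℝ) ≤ ((m + m : ℕ) : ℝ) := by rw [hNval]; nlinarith
    exact_mod_cast h1
  have hbn : b ≤ m + m := by
    have h1 : (b:ℝ) < ((m + m + 1 : ℕ) : ℝ) := by push_cast; nlinarith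
    have h2 : b < m + m + 1 := by exact_mod_cast h1
    omega
  rw [cardB _ _ _ han hbn, cardW]
  have e1 : (m + m + 1) / 2 = m := by omega
  have e2 : (m + m) / 2 = m := by omega
  rw [e1, e2, hNval]
  have qa1 : ((a / 2 : ℕ) : ℝ) ≤ (a : ℝ) / 2 := by
    have h1 : 2 * (a / 2) ≤ a := by omega
    have h2 := (Nat.cast_le (α := ℝ)).2 h1; push_cast at h2; linarith
  have qa2 : ((a : ℝ) - 1) / 2 ≤ ((a / 2 : ℕ) : ℝ) := by
    have h1 : a ≤ 2 * (a / 2) + 1 := by omega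
    have h2 := (Nat.cast_le (α := ℝ)).2 h1; push_cast at h2; linarith
  have qb1 : ((b / 2 : ℕ) : ℝ) ≤ (b : ℝ) / 2 := by
    have h1 : 2 * (b / 2) ≤ b := by omega
    have h2 := (Nat.cast_le (α := ℝ)).2 h1; push_cast at h2; linarith
  have qb2 : ((b : ℝ) - 1) / 2 ≤ ((b / 2 : ℕ) : ℝ) := by
    have h1 : b ≤ 2 * (b / 2) + 1 := by omega
    have h2 := (Nat.cast_le (α := ℝ)).2 h1; push_cast at h2; linarith
  apply le_min
  · -- black bound
    push_cast
    have key1 : (c * (m:ℝ) - 1) * m ≤ ((a / 2 : ℕ) : ℝ) * m :=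
      mul_le_mul_of_nonneg_right (by linarith) (by linarith)
    have key2 : (m:ℝ) * (c * (m:ℝ) - 1) ≤ (m:ℝ) * ((b / 2 : ℕ) : ℝ) :=
      mul_le_mul_of_nonneg_left (by linarith) (by linarith)
    linarith [key1, key2]
  · -- white bound
    have ham : a / 2 ≤ m := by omega
    have hbm : b / 2 ≤ m := by omega
    rw [Nat.cast_mul, Nat.cast_sub ham, Nat.cast_sub hbm]
    have hq1m : ((a / 2 : ℕ) : ℝ) ≤ m := by exact_mod_cast ham
    have hq2m : ((b / 2 : ℕ) : ℝ) ≤ m := by exact_mod_cast hbm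
    have f1 : (1 - c) * m ≤ (m:ℝ) - ((a / 2 : ℕ) : ℝ) := by nlinarith
    have f2 : (1 - c) * m - 1 ≤ (m:ℝ) - ((b / 2 : ℕ) : ℝ) := by nlinarith
    rcases le_or_gt ((1 - c) * m) 1 with hcase | hcase
    · have prodpos : (0:ℝ) ≤ ((m:ℝ) - ((a / 2 : ℕ) : ℝ)) * ((m:ℝ) - ((b / 2 : ℕ) : ℝ)) :=
        mul_nonneg (by linarith) (by linarith)
      have hm2 : (m:ℝ) ≤ 2 := by nlinarith
      have hcm2 : c * (m:ℝ) ≤ 1 := by nlinarith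
      nlinarith [prodpos, hcm2, hm1]
    · have f3 : (0:ℝ) ≤ (1 - c) * m - 1 := by linarith
      have key : ((1 - c) * m) * ((1 - c) * m - 1) ≤
          ((m:ℝ) - ((a / 2 : ℕ) : ℝ)) * ((m:ℝ) - ((b / 2 : ℕ) : ℝ)) :=
        mul_le_mul f1 f2 f3 (by linarith)
      have expand : ((1 - c) * (m:ℝ)) * ((1 - c) * m - 1) = 2 * c * m ^ 2 - (1 - c) * m := by
        linear_combination (m:ℝ) ^ 2 * hsq
      linarith [key, expand, hcm0, hm1]
end

section
/- For every odd n ∈ ℕ, the n-argyle is a peaceful battle on the n×n torus 𝕋_n: its sets B and W are disjoint, and every hyperedge e of 𝕋_n satisfies e∩B = ∅ or e∩W = ∅. -/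
open Finset

/-- The white squares of the `n`-argyle (for odd `n`):
`(i,j)` with `i, j` both odd, `−⌊n/3⌋ ≤ i − j ≤ ⌊n/3⌋ − 1`, and
(`i + j ≤ ⌊2n/3⌋` or `i + j ≥ ⌈4n/3⌉ + 1`). -/
def argyleW (n : ℕ) : Finset (ℕ × ℕ) :=
  (cells n).filter (fun p =>
    Odd p.1 ∧ Odd p.2 ∧
    -((n / 3 : ℕ) : ℤ) ≤ (p.1 : ℤ) - (p.2 : ℤ) ∧
    (p.1 : ℤ) - (p.2 : ℤ) ≤ ((n / 3 : ℕ) : ℤ) - 1 ∧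
    (p.1 + p.2 ≤ 2 * n / 3 ∨ (4 * n + 2) / 3 + 1 ≤ p.1 + p.2))

/-- The black squares of the `n`-argyle (for odd `n`):
`(i,j)` with `i, j` both even, `⌈2n/3⌉ + 1 ≤ i + j ≤ ⌈4n/3⌉`, and
(`i − j ≤ −⌊n/3⌋ − 1` or `i − j ≥ ⌊n/3⌋`). -/
def argyleB (n : ℕ) : Finset (ℕ × ℕ) :=
  (cells n).filter (fun p =>
    Even p.1 ∧ Even p.2 ∧
    (2 * n + 2) / 3 + 1 ≤ p.1 + p.2 ∧ p.1 + p.2 ≤ (4 * n + 2) / 3 ∧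
    ((p.1 : ℤ) - (p.2 : ℤ) ≤ -((n / 3 : ℕ) : ℤ) - 1 ∨ ((n / 3 : ℕ) : ℤ) ≤ (p.1 : ℤ) - (p.2 : ℤ)))

/-!
Black cells have both coordinates even and white cells both odd, so no row or column meets
both colours. For two such cells, `i - j` (and likewise `i + j`) differ by an even number of
absolute value less than `2n`; for odd `n` a difference divisible by `n` is then `0`, so a
common `ℤ_n`-diagonal forces equal values of `i - j` in `ℤ`. The argyle puts the black and
white values of `i - j` (and of `i + j`) in disjoint ranges.
-/

theorem Int.eq_of_intCast_eq_of_even_sub {n : ℕ} (hn : Odd n) {a b : ℤ}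
    (h : (a : ZMod n) = b) (he : Even (a - b)) (hlt : |a - b| < 2 * n) : a = b := by
  have hcop : IsCoprime (2 : ℤ) n := by
    exact_mod_cast (Nat.coprime_two_left.mpr hn).isCoprime
  have hdvd : 2 * (n : ℤ) ∣ a - b :=
    hcop.mul_dvd he.two_dvd ((ZMod.intCast_eq_intCast_iff_dvd_sub b a n).mp h.symm)
  exact sub_eq_zero.mp (Int.eq_zero_of_abs_lt_dvd hdvd hlt)

theorem Finset.filter_fiber_inter_eq_empty_or {α β : Type*} [DecidableEq α] [DecidableEq β]
    {s B W : Finset α} (f : α → β) (k : β) (h : ∀ p ∈ B, ∀ q ∈ W, f p ≠ f q) :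
    s.filter (fun p => f p = k) ∩ B = ∅ ∨ s.filter (fun p => f p = k) ∩ W = ∅ := by
  by_contra! hne
  obtain ⟨⟨p, hp⟩, ⟨q, hq⟩⟩ := hne
  simp only [mem_inter, mem_filter] at hp hq
  exact h p hp.2 q hq.2 (hp.1.2.trans hq.1.2.symm)

section Argyle

variable {n : ℕ} {p q : ℕ × ℕ}

theorem mem_argyleB_iff :
    p ∈ argyleB n ↔ (1 ≤ p.1 ∧ p.1 ≤ n) ∧ (1 ≤ p.2 ∧ p.2 ≤ n) ∧ p.1 % 2 = 0 ∧ p.2 % 2 = 0 ∧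
      (2 * n + 2) / 3 + 1 ≤ p.1 + p.2 ∧ p.1 + p.2 ≤ (4 * n + 2) / 3 ∧
      ((p.1 : ℤ) - p.2 ≤ -((n / 3 : ℕ) : ℤ) - 1 ∨ ((n / 3 : ℕ) : ℤ) ≤ (p.1 : ℤ) - p.2) := by
  simp only [argyleB, cells, mem_filter, mem_product, mem_Icc, Nat.even_iff, and_assoc]

theorem mem_argyleW_iff :
    q ∈ argyleW n ↔ (1 ≤ q.1 ∧ q.1 ≤ n) ∧ (1 ≤ q.2 ∧ q.2 ≤ n) ∧ q.1 % 2 = 1 ∧ q.2 % 2 = 1 ∧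
      -((n / 3 : ℕ) : ℤ) ≤ (q.1 : ℤ) - q.2 ∧ (q.1 : ℤ) - q.2 ≤ ((n / 3 : ℕ) : ℤ) - 1 ∧
      (q.1 + q.2 ≤ 2 * n / 3 ∨ (4 * n + 2) / 3 + 1 ≤ q.1 + q.2) := by
  simp only [argyleW, cells, mem_filter, mem_product, mem_Icc, Nat.odd_iff, and_assoc]

theorem argyle_fst_ne (hp : p ∈ argyleB n) (hq : q ∈ argyleW n) : p.1 ≠ q.1 := by
  rw [mem_argyleB_iff] at hp
  rw [mem_argyleW_iff] at hq
  omega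

theorem argyle_snd_ne (hp : p ∈ argyleB n) (hq : q ∈ argyleW n) : p.2 ≠ q.2 := by
  rw [mem_argyleB_iff] at hp
  rw [mem_argyleW_iff] at hq
  omega

theorem argyle_diag_ne (hn : Odd n) (hp : p ∈ argyleB n) (hq : q ∈ argyleW n) :
    (p.1 : ZMod n) - p.2 ≠ q.1 - q.2 := by
  intro h
  rw [mem_argyleB_iff] at hp
  rw [mem_argyleW_iff] at hq
  have hZ : (p.1 : ℤ) - p.2 = q.1 - q.2 :=
    Int.eq_of_intCast_eq_of_even_sub hn (by push_cast; exact h)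
      (by rw [Int.even_iff]; omega) (by rw [abs_lt]; omega)
  omega

theorem argyle_antidiag_ne (hn : Odd n) (hp : p ∈ argyleB n) (hq : q ∈ argyleW n) :
    (p.1 : ZMod n) + p.2 ≠ q.1 + q.2 := by
  intro h
  rw [mem_argyleB_iff] at hp
  rw [mem_argyleW_iff] at hq
  have hZ : ((p.1 + p.2 : ℕ) : ℤ) = (q.1 + q.2 : ℕ) :=
    Int.eq_of_intCast_eq_of_even_sub hn (by push_cast; exact h)
      (by rw [Int.even_iff]; omega) (by rw [abs_lt]; omega)
  omega

end Argyle

/-- For every odd `n`, the `n`-argyle is a peaceful battle on the `n × n` torus `𝕋_n`. -/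
theorem argyle_isPeaceful (n : ℕ) (hn : Odd n) :
    IsPeacefulTorus n (argyleB n) (argyleW n) := by
  refine ⟨filter_subset _ _, filter_subset _ _, ?_, ?_⟩
  · exact disjoint_left.mpr fun _ hB hW => argyle_fst_ne hB hW rfl
  rintro e (⟨i, -, rfl⟩ | ⟨j, -, rfl⟩ | ⟨k, rfl⟩ | ⟨k, rfl⟩)
  · exact filter_fiber_inter_eq_empty_or Prod.fst i fun _ hp _ hq => argyle_fst_ne hp hq
  · exact filter_fiber_inter_eq_empty_or Prod.snd j fun _ hp _ hq => argyle_snd_ne hp hq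
  · exact filter_fiber_inter_eq_empty_or (fun p => (p.1 : ZMod n) - p.2) k
      fun _ hp _ hq => argyle_diag_ne hn hp hq
  · exact filter_fiber_inter_eq_empty_or (fun p => (p.1 : ZMod n) + p.2) k
      fun _ hp _ hq => argyle_antidiag_ne hn hp hq
end

section
/- There is a constant C > 0 such that for every odd n ∈ ℕ, the n-argyle (B,W) satisfies min{|B|,|W|} ≥ n²/12 − C·n. -/
open Finset

def kite (M p r : ℕ) : Finset (ℕ × ℕ) :=
  ((range (M+1)) ×ˢ (range (M+1))).filter
    (fun x => x.1 + x.2 ≤ M ∧ x.1 ≤ x.2 + p ∧ x.2 ≤ x.1 + r)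

lemma sum_min_bound (t : ℕ) (ht : 1 ≤ t) (M : ℕ) :
    2*(M+1)*t ≤ 2*(∑ k ∈ range (M+1), (min k (t-1) + 1)) + t*t ∧
    (M+2 ≤ t → 2*(∑ k ∈ range (M+1), (min k (t-1) + 1)) = (M+1)*(M+2)) := by
  induction M with
  | zero =>
    rw [Finset.sum_range_one]
    constructor
    · have : min 0 (t-1) = 0 := by omega
      rw [this]; nlinarith
    · intro h; omega
  | succ M ih =>
    obtain ⟨h1, h2⟩ := ih
    rw [Finset.sum_range_succ]
    set S := ∑ k ∈ range (M+1), (min k (t-1) + 1) with hS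
    by_cases hc : M + 3 ≤ t
    · have hS2 : 2*S = (M+1)*(M+2) := h2 (by omega)
      have hmin : min (M+1) (t-1) = M+1 := by omega
      rw [hmin]
      constructor
      · nlinarith
      · intro _; linear_combination hS2
    · have hmin : min (M+1) (t-1) = t - 1 := by omega
      rw [hmin]
      constructor
      · have htt : t - 1 + 1 = t := by omega
        rw [htt]; nlinarith
      · intro h; omega

lemma kite_card (M p r : ℕ) :
    2*(M+1)*(min p r) ≤ 2 * (kite M p r).card + (min p r)*(min p r) := by
  set t := min p r with hT
  rcases Nat.eq_zero_or_pos t with h0 | ht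
  · simp [h0]
  have htp : t ≤ p := min_le_left _ _
  have htr : t ≤ r := min_le_right _ _
  set f : ℕ → Finset (ℕ × ℕ) :=
    fun k => (Icc ((k+1-t)/2) ((k+1-t)/2 + min k (t-1))).image (fun a => (a, k - a)) with hf
  have hmemf : ∀ k x, x ∈ f k → ∃ a, (k+1-t)/2 ≤ a ∧ a ≤ (k+1-t)/2 + min k (t-1)
      ∧ x = (a, k - a) := by
    intro k x hx
    simp only [hf, Finset.mem_image, Finset.mem_Icc] at hx
    obtain ⟨a, ⟨h1, h2⟩, h3⟩ := hx
    exact ⟨a, h1, h2, h3.symm⟩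
  have hrow : ∀ k, (f k).card = min k (t-1) + 1 := by
    intro k
    rw [hf]
    rw [Finset.card_image_of_injective _ (fun a b h => by
      simpa using congrArg Prod.fst h)]
    rw [Nat.card_Icc]; omega
  have hdisj : ∀ x ∈ range (M+1), ∀ y ∈ range (M+1), x ≠ y → Disjoint (f x) (f y) := by
    intro k _ k' _ hkk'
    rw [Finset.disjoint_left]
    intro x hx hx'
    obtain ⟨a, ha1, ha2, ha3⟩ := hmemf _ _ hx
    obtain ⟨b, hb1, hb2, hb3⟩ := hmemf _ _ hx'
    rw [ha3] at hb3
    have h1 : a = b := congrArg Prod.fst hb3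
    have h2 : k - a = k' - b := congrArg Prod.snd hb3
    omega
  have hsub : (range (M+1)).biUnion f ⊆ kite M p r := by
    intro x hx
    rw [Finset.mem_biUnion] at hx
    obtain ⟨k, hk, hxk⟩ := hx
    rw [Finset.mem_range] at hk
    obtain ⟨a, ha1, ha2, ha3⟩ := hmemf _ _ hxk
    subst ha3
    simp only [kite, Finset.mem_filter, Finset.mem_product, Finset.mem_range]
    refine ⟨⟨by omega, by omega⟩, by omega, by omega, by omega⟩
  have hcard : ((range (M+1)).biUnion f).card = ∑ k ∈ range (M+1), (min k (t-1) + 1) := by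
    rw [Finset.card_biUnion hdisj]
    exact Finset.sum_congr rfl (fun k _ => hrow k)
  have hle : ((range (M+1)).biUnion f).card ≤ (kite M p r).card :=
    Finset.card_le_card hsub
  have := (sum_min_bound t ht M).1
  omega

lemma mem_kite {M p r : ℕ} {x : ℕ × ℕ} :
    x ∈ kite M p r ↔ x.1 ≤ M ∧ x.2 ≤ M ∧ x.1 + x.2 ≤ M ∧ x.1 ≤ x.2 + p ∧ x.2 ≤ x.1 + r := by
  simp only [kite, Finset.mem_filter, Finset.mem_product, Finset.mem_range]
  omega


lemma W_lower (n : ℕ) (hn : Odd n) (hge : 37 ≤ n) :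
    ((n:ℝ)^2)/12 - 3*n ≤ ((argyleW n).card : ℝ) := by
  have hodd : n % 2 = 1 := Nat.odd_iff.mp hn
  set q := n/3 with hq
  set t := (q-1)/2 with ht
  set M₁ := (2*n/3 - 2)/2 with hM₁
  set M₂ := (2*n - (4*n+2)/3 - 1)/2 with hM₂
  set K₁ := kite M₁ ((q-1)/2) (q/2) with hK₁
  set K₂ := kite M₂ (q/2) ((q-1)/2) with hK₂
  set f₁ : ℕ × ℕ → ℕ × ℕ := fun x => (2*x.1+1, 2*x.2+1) with hf₁
  set f₂ : ℕ × ℕ → ℕ × ℕ := fun x => (n - 2*x.1, n - 2*x.2) with hf₂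
  have hM₂n : 2*M₂ + 2 ≤ n := by omega
  -- membership of images
  have hmemW : ∀ p : ℕ × ℕ, p ∈ cells n → (Odd p.1 ∧ Odd p.2 ∧
      -((n / 3 : ℕ) : ℤ) ≤ (p.1 : ℤ) - (p.2 : ℤ) ∧
      (p.1 : ℤ) - (p.2 : ℤ) ≤ ((n / 3 : ℕ) : ℤ) - 1 ∧
      (p.1 + p.2 ≤ 2 * n / 3 ∨ (4 * n + 2) / 3 + 1 ≤ p.1 + p.2)) → p ∈ argyleW n := by
    intro p h1 h2
    exact Finset.mem_filter.mpr ⟨h1, h2⟩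
  have hsub₁ : K₁.image f₁ ⊆ argyleW n := by
    intro x hx
    rw [Finset.mem_image] at hx
    obtain ⟨a, ha, rfl⟩ := hx
    rw [mem_kite] at ha
    show (2*a.1+1, 2*a.2+1) ∈ argyleW n
    apply hmemW
    · simp only [cells, Finset.mem_product, Finset.mem_Icc]
      constructor <;> constructor <;> omega
    · refine ⟨by rw [Nat.odd_iff]; omega, by rw [Nat.odd_iff]; omega, by omega, by omega,
        Or.inl (by omega)⟩
  have hsub₂ : K₂.image f₂ ⊆ argyleW n := by
    intro x hx
    rw [Finset.mem_image] at hx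
    obtain ⟨a, ha, rfl⟩ := hx
    rw [mem_kite] at ha
    show (n - 2*a.1, n - 2*a.2) ∈ argyleW n
    apply hmemW
    · simp only [cells, Finset.mem_product, Finset.mem_Icc]
      constructor <;> constructor <;> omega
    · refine ⟨by rw [Nat.odd_iff]; omega, by rw [Nat.odd_iff]; omega, by omega, by omega,
        Or.inr (by omega)⟩
  have hinj₁ : Set.InjOn f₁ K₁ := by
    intro a _ b _ h
    simp only [hf₁, Prod.mk.injEq] at h
    exact Prod.ext (by omega) (by omega)
  have hinj₂ : Set.InjOn f₂ K₂ := by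
    intro a ha b hb h
    rw [Finset.mem_coe, mem_kite] at ha hb
    simp only [hf₂, Prod.mk.injEq] at h
    exact Prod.ext (by omega) (by omega)
  have hdisj : Disjoint (K₁.image f₁) (K₂.image f₂) := by
    rw [Finset.disjoint_left]
    intro x hx hx'
    rw [Finset.mem_image] at hx hx'
    obtain ⟨a, ha, rfl⟩ := hx
    obtain ⟨b, hb, hbe⟩ := hx'
    rw [mem_kite] at ha hb
    have h1 : n - 2*b.1 = 2*a.1+1 := congrArg Prod.fst hbe
    have h2 : n - 2*b.2 = 2*a.2+1 := congrArg Prod.snd hbe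
    omega
  have hcards : K₁.card + K₂.card ≤ (argyleW n).card := by
    have h1 : (K₁.image f₁).card = K₁.card := Finset.card_image_of_injOn hinj₁
    have h2 : (K₂.image f₂).card = K₂.card := Finset.card_image_of_injOn hinj₂
    have h3 : (K₁.image f₁) ∪ (K₂.image f₂) ⊆ argyleW n := Finset.union_subset hsub₁ hsub₂
    have h4 := Finset.card_le_card h3
    rw [Finset.card_union_of_disjoint hdisj, h1, h2] at h4
    exact h4
  have hk₁ := kite_card M₁ ((q-1)/2) (q/2)
  have hk₂ := kite_card M₂ (q/2) ((q-1)/2)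
  have hmin₁ : min ((q-1)/2) (q/2) = t := by omega
  have hmin₂ : min (q/2) ((q-1)/2) = t := by omega
  rw [hmin₁] at hk₁
  rw [hmin₂] at hk₂
  -- numeric facts
  have e1 : n ≤ 6*t + 11 := by omega
  have e2 : 6*t ≤ n := by omega
  have e3 : 2*n ≤ 6*M₁ + 11 := by omega
  have e4 : 2*n ≤ 6*M₂ + 11 := by omega
  -- to reals
  have c1 : 2*((M₁:ℝ)+1)*t ≤ 2*(K₁.card:ℝ) + (t:ℝ)*t := by exact_mod_cast hk₁
  have c2 : 2*((M₂:ℝ)+1)*t ≤ 2*(K₂.card:ℝ) + (t:ℝ)*t := by exact_mod_cast hk₂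
  have c3 : (K₁.card:ℝ) + K₂.card ≤ ((argyleW n).card:ℝ) := by exact_mod_cast hcards
  have r1 : (n:ℝ) ≤ 6*t + 11 := by exact_mod_cast e1
  have r2 : 6*(t:ℝ) ≤ n := by exact_mod_cast e2
  have r3 : 2*(n:ℝ) ≤ 6*M₁ + 11 := by exact_mod_cast e3
  have r4 : 2*(n:ℝ) ≤ 6*M₂ + 11 := by exact_mod_cast e4
  have rn : (37:ℝ) ≤ n := by exact_mod_cast hge
  have ht0 : (0:ℝ) ≤ t := Nat.cast_nonneg t
  have hp1 : (2*(n:ℝ) - 11) * ((n:ℝ) - 11) ≤ (6*((M₁:ℝ)+1)) * (6*(t:ℝ)) := by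
    apply mul_le_mul (by linarith) (by linarith) (by linarith) (by linarith)
  have hp2 : (2*(n:ℝ) - 11) * ((n:ℝ) - 11) ≤ (6*((M₂:ℝ)+1)) * (6*(t:ℝ)) := by
    apply mul_le_mul (by linarith) (by linarith) (by linarith) (by linarith)
  have hp3 : (6*(t:ℝ))*(6*(t:ℝ)) ≤ (n:ℝ)*n := mul_le_mul r2 r2 (by linarith) (by linarith)
  nlinarith [c1, c2, c3, hp1, hp2, hp3, rn]

lemma B_lower (n : ℕ) (hn : Odd n) (hge : 37 ≤ n) :
    ((n:ℝ)^2)/12 - 3*n ≤ ((argyleB n).card : ℝ) := by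
  have hodd : n % 2 = 1 := Nat.odd_iff.mp hn
  set q := n/3 with hq
  set pp := ((4*n+2)/3 - n - 1)/2 with hpp
  set rr := (n - (2*n+2)/3)/2 with hrr
  set t := min pp rr with ht
  set M₃ := (n - q - 4)/2 with hM₃
  set M₄ := (n - 3 - q)/2 with hM₄
  set K₃ := kite M₃ pp rr with hK₃
  set K₄ := kite M₄ rr pp with hK₄
  set f₃ : ℕ × ℕ → ℕ × ℕ := fun x => (2*x.1+2, n - 1 - 2*x.2) with hf₃
  set f₄ : ℕ × ℕ → ℕ × ℕ := fun x => (n - 1 - 2*x.1, 2*x.2+2) with hf₄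
  have hmemB : ∀ p : ℕ × ℕ, p ∈ cells n → (Even p.1 ∧ Even p.2 ∧
      (2 * n + 2) / 3 + 1 ≤ p.1 + p.2 ∧ p.1 + p.2 ≤ (4 * n + 2) / 3 ∧
      ((p.1 : ℤ) - (p.2 : ℤ) ≤ -((n / 3 : ℕ) : ℤ) - 1 ∨ ((n / 3 : ℕ) : ℤ) ≤ (p.1 : ℤ) - (p.2 : ℤ)))
      → p ∈ argyleB n := by
    intro p h1 h2
    exact Finset.mem_filter.mpr ⟨h1, h2⟩
  have hsub₃ : K₃.image f₃ ⊆ argyleB n := by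
    intro x hx
    rw [Finset.mem_image] at hx
    obtain ⟨a, ha, rfl⟩ := hx
    rw [mem_kite] at ha
    show (2*a.1+2, n - 1 - 2*a.2) ∈ argyleB n
    apply hmemB
    · simp only [cells, Finset.mem_product, Finset.mem_Icc]
      constructor <;> constructor <;> omega
    · refine ⟨by rw [Nat.even_iff]; omega, by rw [Nat.even_iff]; omega, by omega, by omega,
        Or.inl (by omega)⟩
  have hsub₄ : K₄.image f₄ ⊆ argyleB n := by
    intro x hx
    rw [Finset.mem_image] at hx
    obtain ⟨a, ha, rfl⟩ := hx
    rw [mem_kite] at ha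
    show (n - 1 - 2*a.1, 2*a.2+2) ∈ argyleB n
    apply hmemB
    · simp only [cells, Finset.mem_product, Finset.mem_Icc]
      constructor <;> constructor <;> omega
    · refine ⟨by rw [Nat.even_iff]; omega, by rw [Nat.even_iff]; omega, by omega, by omega,
        Or.inr (by omega)⟩
  have hinj₃ : Set.InjOn f₃ K₃ := by
    intro a ha b hb h
    rw [Finset.mem_coe, mem_kite] at ha hb
    simp only [hf₃, Prod.mk.injEq] at h
    exact Prod.ext (by omega) (by omega)
  have hinj₄ : Set.InjOn f₄ K₄ := by
    intro a ha b hb h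
    rw [Finset.mem_coe, mem_kite] at ha hb
    simp only [hf₄, Prod.mk.injEq] at h
    exact Prod.ext (by omega) (by omega)
  have hdisj : Disjoint (K₃.image f₃) (K₄.image f₄) := by
    rw [Finset.disjoint_left]
    intro x hx hx'
    rw [Finset.mem_image] at hx hx'
    obtain ⟨a, ha, rfl⟩ := hx
    obtain ⟨b, hb, hbe⟩ := hx'
    rw [mem_kite] at ha hb
    have h1 : n - 1 - 2*b.1 = 2*a.1+2 := congrArg Prod.fst hbe
    have h2 : 2*b.2+2 = n - 1 - 2*a.2 := congrArg Prod.snd hbe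
    omega
  have hcards : K₃.card + K₄.card ≤ (argyleB n).card := by
    have h1 : (K₃.image f₃).card = K₃.card := Finset.card_image_of_injOn hinj₃
    have h2 : (K₄.image f₄).card = K₄.card := Finset.card_image_of_injOn hinj₄
    have h3 : (K₃.image f₃) ∪ (K₄.image f₄) ⊆ argyleB n := Finset.union_subset hsub₃ hsub₄
    have h4 := Finset.card_le_card h3
    rw [Finset.card_union_of_disjoint hdisj, h1, h2] at h4
    exact h4
  have hk₃ := kite_card M₃ pp rr
  have hk₄ := kite_card M₄ rr pp
  have hmin₄ : min rr pp = t := by omega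
  rw [hmin₄] at hk₄
  rw [← ht] at hk₃
  have e1 : n ≤ 6*t + 11 := by omega
  have e2 : 6*t ≤ n + 6 := by omega
  have e3 : 2*n ≤ 6*M₃ + 17 := by omega
  have e4 : 2*n ≤ 6*M₄ + 17 := by omega
  have c1 : 2*((M₃:ℝ)+1)*t ≤ 2*(K₃.card:ℝ) + (t:ℝ)*t := by exact_mod_cast hk₃
  have c2 : 2*((M₄:ℝ)+1)*t ≤ 2*(K₄.card:ℝ) + (t:ℝ)*t := by exact_mod_cast hk₄
  have c3 : (K₃.card:ℝ) + K₄.card ≤ ((argyleB n).card:ℝ) := by exact_mod_cast hcards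
  have r1 : (n:ℝ) ≤ 6*t + 11 := by exact_mod_cast e1
  have r2 : 6*(t:ℝ) ≤ (n:ℝ) + 6 := by exact_mod_cast e2
  have r3 : 2*(n:ℝ) ≤ 6*M₃ + 17 := by exact_mod_cast e3
  have r4 : 2*(n:ℝ) ≤ 6*M₄ + 17 := by exact_mod_cast e4
  have rn : (37:ℝ) ≤ n := by exact_mod_cast hge
  have ht0 : (0:ℝ) ≤ t := Nat.cast_nonneg t
  have hp1 : (2*(n:ℝ) - 17) * ((n:ℝ) - 11) ≤ (6*((M₃:ℝ)+1)) * (6*(t:ℝ)) := by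
    apply mul_le_mul (by linarith) (by linarith) (by linarith) (by linarith)
  have hp2 : (2*(n:ℝ) - 17) * ((n:ℝ) - 11) ≤ (6*((M₄:ℝ)+1)) * (6*(t:ℝ)) := by
    apply mul_le_mul (by linarith) (by linarith) (by linarith) (by linarith)
  have hp3 : (6*(t:ℝ))*(6*(t:ℝ)) ≤ ((n:ℝ)+6)*((n:ℝ)+6) :=
    mul_le_mul r2 r2 (by linarith) (by linarith)
  nlinarith [c1, c2, c3, hp1, hp2, hp3, rn]


/-- There is a constant `C > 0` such that for every odd `n`, the `n`-argyle `(B, W)`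
satisfies `min {|B|, |W|} ≥ n²/12 − C n`. -/
theorem argyle_card_lower_bound :
    ∃ C : ℝ, 0 < C ∧ ∀ n : ℕ, Odd n →
      (n : ℝ) ^ 2 / 12 - C * (n : ℝ) ≤
        min ((argyleB n).card : ℝ) ((argyleW n).card : ℝ) := by
  refine ⟨3, by norm_num, fun n hn => ?_⟩
  rcases le_or_gt 37 n with hge | hlt
  · exact le_min (by have := B_lower n hn hge; linarith) (by have := W_lower n hn hge; linarith)
  · have hn36 : (n:ℝ) ≤ 36 := by exact_mod_cast Nat.lt_succ_iff.mp hlt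
    have hn0 : (0:ℝ) ≤ (n:ℝ) := Nat.cast_nonneg n
    have h0 : (n:ℝ)^2/12 - 3*n ≤ 0 := by nlinarith
    exact le_trans h0 (le_min (Nat.cast_nonneg _) (Nat.cast_nonneg _))
end
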